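/- For each j ≥ 1, the partial sums of Catalan triangle columns satisfy: f_j(1/4) = Σ_{l=j}^∞ C(l,j)/4^{l-1} = 1/2^{j-2}, equivalently (1/4)·f_j(1/4) = 1/2^j. In particular f_1(1/4) = 2 and f_2(1/4) = 1. -/

import Mathlib

/-!
Solving the recurrence column by column gives the ballot numbers
`C (k + d + 1) (k + 1) = (k + 2d).choose (k + d) - (k + 2d).choose (k + d + 1)`, so column 1 holds
the Catalan numbers. Since `catalan n / 4 ^ n = 2 b n - 2 b (n + 1)` with
`b n = centralBinom n / 4 ^ n → 0`, this gives `f₁(1/4) = 2`.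
Writing `f_j(x) = ∑ C (n + 1) j xⁿ`, the recurrence read down a column gives `f₂ = f₁ - 1` and
`f_{j+2}(x) = f_{j+1}(x) - x f_j(x)` for `j ≥ 1`; at `x = 1/4` this recursion, started at `2, 1`,
is solved by `2 ^ (2 - j)`.
-/

open Filter Topology Finset

theorem Nat.centralBinom_sq_mul_le (n : ℕ) : n.centralBinom ^ 2 * (2 * n + 1) ≤ 16 ^ n := by
  induction n with
  | zero => simp
  | succ n ih =>
    have key : (n + 1) ^ 2 * ((n + 1).centralBinom ^ 2 * (2 * (n + 1) + 1))
        = 4 * (2 * n + 1) * (2 * n + 3) * (n.centralBinom ^ 2 * (2 * n + 1)) := by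
      calc _ = ((n + 1) * (n + 1).centralBinom) ^ 2 * (2 * n + 3) := by ring
        _ = _ := by rw [Nat.succ_mul_centralBinom_succ]; ring
    refine Nat.le_of_mul_le_mul_left ?_ (by positivity : 0 < (n + 1) ^ 2)
    rw [key]
    calc _ ≤ 16 * (n + 1) ^ 2 * 16 ^ n := Nat.mul_le_mul (by nlinarith) ih
      _ = (n + 1) ^ 2 * 16 ^ (n + 1) := by ring

theorem tendsto_centralBinom_div_four_pow :
    Tendsto (fun n : ℕ => (n.centralBinom : ℝ) / 4 ^ n) atTop (𝓝 0) := by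
  have hbound (n : ℕ) : (n.centralBinom : ℝ) / 4 ^ n ≤ √((2 * n + 1)⁻¹) := by
    rw [Real.le_sqrt (by positivity) (by positivity), div_pow, ← pow_mul, mul_comm n, pow_mul,
      div_le_iff₀ (by positivity), inv_mul_eq_div, le_div_iff₀ (by positivity)]
    exact_mod_cast by simpa using Nat.centralBinom_sq_mul_le n
  refine squeeze_zero (fun n => by positivity) hbound ?_
  have h : Tendsto (fun n : ℕ => 2 * (n : ℝ) + 1) atTop atTop :=
    tendsto_atTop_add_const_right _ _
      (tendsto_natCast_atTop_atTop.const_mul_atTop two_pos)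
  simpa using h.inv_tendsto_atTop.sqrt

theorem catalan_eq_choose_sub_choose (n : ℕ) :
    (catalan n : ℝ) = (2 * n).choose n - (2 * n).choose (n + 1) := by
  have hcat : ((n + 1) * catalan n : ℝ) = (2 * n).choose n := by
    exact_mod_cast succ_mul_catalan_eq_centralBinom n
  have hchoose : ((2 * n).choose (n + 1) * (n + 1) : ℝ) = (2 * n).choose n * n := by
    exact_mod_cast (Nat.choose_succ_right_eq (2 * n) n).trans
      (by rw [Nat.two_mul, Nat.add_sub_cancel])
  refine mul_left_cancel₀ (by positivity : (n + 1 : ℝ) ≠ 0) ?_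
  linear_combination hcat + hchoose

theorem catalan_div_four_pow_eq_sub (n : ℕ) :
    (catalan n : ℝ) / 4 ^ n
      = 2 * (n.centralBinom / 4 ^ n) - 2 * ((n + 1).centralBinom / 4 ^ (n + 1)) := by
  have hcat : (catalan n : ℝ) = n.centralBinom / (n + 1) := by
    rw [eq_div_iff (by positivity), mul_comm]
    exact_mod_cast succ_mul_catalan_eq_centralBinom n
  have hcb : ((n + 1).centralBinom : ℝ) = 2 * (2 * n + 1) * n.centralBinom / (n + 1) := by
    rw [eq_div_iff (by positivity), mul_comm]
    exact_mod_cast Nat.succ_mul_centralBinom_succ n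
  rw [hcat, hcb, pow_succ]
  field_simp
  ring

theorem hasSum_catalan_div_four_pow : HasSum (fun n => (catalan n : ℝ) / 4 ^ n) 2 := by
  rw [hasSum_iff_tendsto_nat_of_nonneg (fun n => by positivity)]
  have hpartial (n : ℕ) :
      ∑ i ∈ range n, (catalan i : ℝ) / 4 ^ i = 2 - 2 * (n.centralBinom / 4 ^ n) := by
    simp_rw [catalan_div_four_pow_eq_sub]
    rw [sum_range_sub' (fun i => 2 * ((i.centralBinom : ℝ) / 4 ^ i))]
    simp
  simp_rw [hpartial]
  simpa using (tendsto_centralBinom_div_four_pow.const_mul 2).const_sub 2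

def ballot (k d : ℕ) : ℝ := (k + 2 * d).choose (k + d) - (k + 2 * d).choose (k + d + 1)

theorem ballot_zero_right (k : ℕ) : ballot k 0 = 1 := by
  simp [ballot]

theorem ballot_zero_succ (d : ℕ) : ballot 0 (d + 1) = ballot 1 d := by
  have hsucc := Nat.choose_succ_succ (2 * d + 1)
  simp only [ballot, show 0 + 2 * (d + 1) = 2 * d + 1 + 1 by ring,
    show 1 + 2 * d = 2 * d + 1 by ring, zero_add, add_comm 1 d, hsucc, Nat.choose_symm_half]
  push_cast
  ring

theorem ballot_succ_succ (k d : ℕ) :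
    ballot (k + 1) (d + 1) = ballot k (d + 1) + ballot (k + 2) d := by
  have hsucc := Nat.choose_succ_succ (k + 2 * d + 2)
  simp only [ballot, show k + 1 + 2 * (d + 1) = k + 2 * d + 2 + 1 by ring,
    show k + 2 * (d + 1) = k + 2 * d + 2 by ring, show k + 2 + 2 * d = k + 2 * d + 2 by ring,
    show k + 1 + (d + 1) = k + d + 1 + 1 by ring, show k + (d + 1) = k + d + 1 by ring,
    show k + 2 + d = k + d + 1 + 1 by ring, hsucc]
  push_cast
  ring

structure IsCatalanTriangle (C : ℕ → ℕ → ℝ) : Prop where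
  one_one : C 1 1 = 1
  zero_right : ∀ i, C i 0 = 0
  eq_zero_of_lt : ∀ i j, i < j → C i j = 0
  recurrence : ∀ i j, 1 ≤ j → j ≤ i → (i, j) ≠ (1, 1) →
    C i j = C (i - 1) (j - 1) + C i (j + 1)

namespace IsCatalanTriangle

variable {C : ℕ → ℕ → ℝ}

theorem apply_succ_succ (hC : IsCatalanTriangle C) {i j : ℕ} (hji : j ≤ i)
    (hij : (i, j) ≠ (0, 0)) :
    C (i + 1) (j + 1) = C i j + C (i + 1) (j + 2) :=
  hC.recurrence (i + 1) (j + 1) (by omega) (by omega) (by simpa using hij)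

theorem apply_add_add_one (hC : IsCatalanTriangle C) (k d : ℕ) :
    C (k + d + 1) (k + 1) = ballot k d := by
  induction d generalizing k with
  | zero =>
    induction k with
    | zero => simpa [ballot_zero_right] using hC.one_one
    | succ k ih =>
      calc C (k + 1 + 0 + 1) (k + 1 + 1) = C (k + 0 + 1) (k + 1) + C (k + 1 + 1) (k + 1 + 2) :=
            hC.apply_succ_succ (by omega) (by simp)
        _ = ballot (k + 1) 0 := by
            rw [ih, hC.eq_zero_of_lt _ _ (by omega), add_zero, ballot_zero_right, ballot_zero_right]
  | succ d ihd =>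
    induction k with
    | zero =>
      calc C (0 + (d + 1) + 1) (0 + 1) = C (d + 1) 0 + C (1 + d + 1) (1 + 1) := by
            convert hC.apply_succ_succ (i := d + 1) (j := 0) (by omega) (by simp) using 3 <;> omega
        _ = ballot 0 (d + 1) := by rw [hC.zero_right, zero_add, ihd, ballot_zero_succ]
    | succ k ihk =>
      calc C (k + 1 + (d + 1) + 1) (k + 1 + 1)
            = C (k + (d + 1) + 1) (k + 1) + C (k + 2 + d + 1) (k + 2 + 1) := by
            convert hC.apply_succ_succ (i := k + d + 2) (j := k + 1) (by omega) (by simp)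
              using 3 <;> omega
        _ = ballot (k + 1) (d + 1) := by rw [ihk, ihd, ballot_succ_succ]

theorem apply_succ_one (hC : IsCatalanTriangle C) (n : ℕ) : C (n + 1) 1 = catalan n := by
  simpa [ballot, two_mul, catalan_eq_choose_sub_choose] using hC.apply_add_add_one 0 n

theorem apply_add_two_two (hC : IsCatalanTriangle C) (n : ℕ) : C (n + 2) 2 = C (n + 2) 1 := by
  simpa [hC.zero_right] using (hC.apply_succ_succ (i := n + 1) (j := 0) (by omega) (by simp)).symm

theorem apply_succ_add_two (hC : IsCatalanTriangle C) {j : ℕ} (hj : 1 ≤ j) (n : ℕ) :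
    C (n + 1) (j + 2) = C (n + 1) (j + 1) - C n j := by
  rcases lt_or_ge n j with hn | hn
  · simp [hC.eq_zero_of_lt _ _ hn, hC.eq_zero_of_lt (n + 1) _ (by omega : n + 1 < j + 2),
      hC.eq_zero_of_lt (n + 1) _ (by omega : n + 1 < j + 1)]
  · rw [hC.apply_succ_succ hn (by simp; omega)]
    ring

theorem hasSum_column_two (hC : IsCatalanTriangle C) {x a : ℝ}
    (h : HasSum (fun n => C (n + 1) 1 * x ^ n) a) :
    HasSum (fun n => C (n + 1) 2 * x ^ n) (a - 1) := by
  rw [← hasSum_nat_add_iff' 1] at h ⊢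
  simpa [hC.one_one, hC.eq_zero_of_lt 1 2 one_lt_two, hC.apply_add_two_two] using h

theorem hasSum_column_add_two (hC : IsCatalanTriangle C) {j : ℕ} (hj : 1 ≤ j) {x a b : ℝ}
    (h₁ : HasSum (fun n => C (n + 1) (j + 1) * x ^ n) a)
    (h₀ : HasSum (fun n => C (n + 1) j * x ^ n) b) :
    HasSum (fun n => C (n + 1) (j + 2) * x ^ n) (a - x * b) := by
  have hshift : HasSum (fun n => C n j * x ^ n) (x * b) := by
    have h : HasSum (fun n => C (n + 1) j * x ^ (n + 1)) (x * b) := by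
      simpa only [pow_succ, mul_left_comm x, mul_comm x] using h₀.mul_left x
    simpa [hC.eq_zero_of_lt 0 j hj] using HasSum.zero_add (f := fun n => C n j * x ^ n) h
  simpa only [hC.apply_succ_add_two hj, sub_mul] using h₁.sub hshift

theorem hasSum_column_one_quarter (hC : IsCatalanTriangle C) :
    HasSum (fun n => C (n + 1) 1 * (1 / 4 : ℝ) ^ n) 2 := by
  simpa [hC.apply_succ_one, div_eq_mul_inv] using hasSum_catalan_div_four_pow

theorem hasSum_column_quarter (hC : IsCatalanTriangle C) (k : ℕ) :
    HasSum (fun n => C (n + 1) (k + 1) * (1 / 4 : ℝ) ^ n) (2 / 2 ^ k) := by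
  suffices ∀ m : ℕ, HasSum (fun n => C (n + 1) (m + 1) * (1 / 4 : ℝ) ^ n) (2 / 2 ^ m) ∧
      HasSum (fun n => C (n + 1) (m + 2) * (1 / 4 : ℝ) ^ n) (2 / 2 ^ (m + 1)) from
    (this k).1
  intro m
  induction m with
  | zero =>
    have h₁ := hC.hasSum_column_one_quarter
    refine ⟨by simpa using h₁, ?_⟩
    convert hC.hasSum_column_two h₁ using 1
    norm_num
  | succ m ih =>
    refine ⟨ih.2, ?_⟩
    convert hC.hasSum_column_add_two (j := m + 1) (by omega) ih.2 ih.1 using 1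
    field_simp
    ring

end IsCatalanTriangle

/-- For each j ≥ 1, f_j(1/4) = Σ_{l=j}^∞ C(l,j)/4^{l-1} = 1/2^{j-2} = 2^{2-j}
(the terms with l < j vanish since C(l,j) = 0 for j > l). -/
theorem catalan_triangle_genfun_at_quarter (C : ℕ → ℕ → ℝ)
    (h11 : C 1 1 = 1)
    (h0 : ∀ i, C i 0 = 0)
    (hgt : ∀ i j, i < j → C i j = 0)
    (hrec : ∀ i j, 1 ≤ j → j ≤ i → (i, j) ≠ (1, 1) →
      C i j = C (i - 1) (j - 1) + C i (j + 1)) :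
    ∀ j : ℕ, 1 ≤ j →
      HasSum (fun l : ℕ => C l j * (1 / 4 : ℝ) ^ (l - 1)) ((2 : ℝ) ^ ((2 : ℤ) - j)) := by
  have hC : IsCatalanTriangle C := ⟨h11, h0, hgt, hrec⟩
  intro j hj
  obtain ⟨k, rfl⟩ := Nat.exists_eq_add_of_le' hj
  have hval : (2 : ℝ) ^ ((2 : ℤ) - (k + 1 : ℕ)) = 2 / 2 ^ k := by
    rw [zpow_sub₀ two_ne_zero, zpow_natCast, pow_succ]
    norm_num
    ring
  rw [← hasSum_nat_add_iff' 1, hval]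
  simpa [hgt 0 (k + 1) k.succ_pos] using hC.hasSum_column_quarter k
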